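/- For every natural number n ≥ 1, Σ_{k=n}^{∞} 1/k² = 1/n + Σ_{k=1}^{∞} (1/(k+1)) · k! / (n(n+1)(n+2)⋯(n+k)), and the series on the right converges. -/

import Mathlib

open Finset Real Filter

/-- Unsigned Stirling numbers of the first kind. -/
def stirling1 : ℕ → ℕ → ℕ
  | 0, 0 => 1
  | 0, _ + 1 => 0
  | _ + 1, 0 => 0
  | n + 1, k + 1 => n * stirling1 n (k + 1) + stirling1 n k

/-- Signed Stirling numbers of the first kind, as reals. -/
noncomputable def s1 (k l : ℕ) : ℝ := (-1 : ℝ) ^ (k - l) * stirling1 k l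

/-- Bernoulli number (with `B 1 = -1/2`) as a real. -/
noncomputable def B (m : ℕ) : ℝ := ((bernoulli m : ℚ) : ℝ)

/-- Rising factorial (Pochhammer symbol) `(x)_k = x(x+1)⋯(x+k-1)`. -/
noncomputable def rf (x : ℝ) (k : ℕ) : ℝ := ∏ i ∈ Finset.range k, (x + i)

/-!
With `S x = ∑ₘ m! / ((m + 1) (x)ₘ₊₁)`, whose `m = 0` term is `1 / x`, the termwise difference
`S x - S (x + 1)` is `∑ₘ m! / (x)ₘ₊₂`, and this series telescopes through `m! / (x)ₘ₊₁` to `1 / x²`.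
Since `S x = O(1 / x)`, telescoping `S (x + k) - S (x + k + 1) = 1 / (x + k)²` over `k` gives
`∑ₖ 1 / (x + k)² = S x`.
-/

open Topology
open scoped Nat

lemma rf_succ (x : ℝ) (m : ℕ) : rf x (m + 1) = rf x m * (x + m) :=
  prod_range_succ _ _

lemma rf_succ' (x : ℝ) (m : ℕ) : rf x (m + 1) = x * rf (x + 1) m := by
  rw [rf, prod_range_succ', rf, mul_comm]
  congr 1
  · simp
  · exact prod_congr rfl fun i _ => by push_cast; ring

lemma rf_pos {x : ℝ} (hx : 0 < x) (m : ℕ) : 0 < rf x m :=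
  prod_pos fun _ _ => by positivity

lemma rf_le_rf {x y : ℝ} (hx : 0 ≤ x) (hxy : x ≤ y) (m : ℕ) : rf x m ≤ rf y m :=
  prod_le_prod (fun _ _ => by positivity) fun _ _ => by linarith

lemma rf_two (m : ℕ) : rf 2 m = (m + 1)! := by
  induction m with
  | zero => simp [rf]
  | succ m ih =>
    rw [rf_succ, ih, Nat.factorial_succ (m + 1)]
    push_cast
    ring

lemma mul_factorial_le_rf {x : ℝ} (hx : 1 ≤ x) (m : ℕ) : x * (m + 1)! ≤ rf x (m + 1) := by
  rw [rf_succ', ← rf_two]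
  gcongr
  exact rf_le_rf zero_le_two (by linarith) m

lemma factorial_div_rf_le {x : ℝ} (hx : 1 ≤ x) (m : ℕ) :
    m ! / rf x (m + 1) ≤ 1 / (x * ((m : ℝ) + 1)) := by
  have hfac : ((m + 1)! : ℝ) = ((m : ℝ) + 1) * m ! := by push_cast [Nat.factorial_succ]; ring
  rw [div_le_div_iff₀ (rf_pos (by linarith) _) (by positivity), one_mul]
  calc (m ! : ℝ) * (x * ((m : ℝ) + 1)) = x * (m + 1)! := by rw [hfac]; ring
    _ ≤ rf x (m + 1) := mul_factorial_le_rf hx m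

lemma hasSum_sub_succ {f : ℕ → ℝ} {l : ℝ} (hf : ∀ n, f (n + 1) ≤ f n)
    (hl : Tendsto f atTop (𝓝 l)) : HasSum (fun n => f n - f (n + 1)) (f 0 - l) := by
  rw [hasSum_iff_tendsto_nat_of_nonneg fun n => sub_nonneg.2 (hf n)]
  simp_rw [sum_range_sub']
  exact hl.const_sub _

lemma factorial_div_rf_sub_succ {x : ℝ} (hx : 0 < x) (m : ℕ) :
    m ! / rf x (m + 1) - (m + 1)! / rf x (m + 2) = x * (m ! / rf x (m + 2)) := by
  have := rf_pos hx (m + 1)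
  rw [rf_succ x (m + 1), Nat.factorial_succ]
  push_cast
  field_simp
  ring

lemma hasSum_factorial_div_rf {x : ℝ} (hx : 1 ≤ x) :
    HasSum (fun m : ℕ => m ! / rf x (m + 2)) (1 / x ^ 2) := by
  have hx0 : 0 < x := by linarith
  have hdiff := factorial_div_rf_sub_succ hx0
  have hlim : Tendsto (fun m : ℕ => m ! / rf x (m + 1)) atTop (𝓝 0) := by
    refine squeeze_zero (fun m => (div_pos (by positivity) (rf_pos hx0 _)).le)
      (fun m => (factorial_div_rf_le hx m).trans ?_) tendsto_one_div_add_atTop_nhds_zero_nat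
    gcongr
    exact le_mul_of_one_le_left (by positivity) hx
  have hanti (m : ℕ) : (m + 1)! / rf x (m + 1 + 1) ≤ m ! / rf x (m + 1) := by
    have := rf_pos hx0 (m + 2)
    rw [← sub_nonneg, hdiff]
    positivity
  have h := hasSum_sub_succ hanti hlim
  have h0 : ((0 ! : ℕ) : ℝ) / rf x (0 + 1) - 0 = x * (1 / x ^ 2) := by
    simp [rf]
    field_simp
  simp only [hdiff, h0] at h
  exact (hasSum_mul_left_iff hx0.ne').1 h

noncomputable def stirlingTerm (x : ℝ) (m : ℕ) : ℝ := 1 / ((m : ℝ) + 1) * m ! / rf x (m + 1)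

noncomputable def stirlingSum (x : ℝ) : ℝ := ∑' m, stirlingTerm x m

lemma stirlingTerm_zero (x : ℝ) : stirlingTerm x 0 = 1 / x := by
  simp [stirlingTerm, rf]

lemma stirlingTerm_nonneg {x : ℝ} (hx : 0 < x) (m : ℕ) : 0 ≤ stirlingTerm x m := by
  have := rf_pos hx (m + 1)
  unfold stirlingTerm
  positivity

lemma stirlingTerm_le {x : ℝ} (hx : 1 ≤ x) (m : ℕ) :
    stirlingTerm x m ≤ 1 / x * (1 / ((m : ℝ) + 1) ^ 2) := by
  calc stirlingTerm x m = 1 / ((m : ℝ) + 1) * (m ! / rf x (m + 1)) := mul_div_assoc _ _ _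
    _ ≤ 1 / ((m : ℝ) + 1) * (1 / (x * ((m : ℝ) + 1))) := by
      gcongr ?_ * ?_
      exact factorial_div_rf_le hx m
    _ = 1 / x * (1 / ((m : ℝ) + 1) ^ 2) := by
      field_simp

lemma summable_one_div_nat_add_one_sq : Summable fun m : ℕ => 1 / ((m : ℝ) + 1) ^ 2 := by
  simpa using (summable_nat_add_iff 1).2 (Real.summable_one_div_nat_pow.2 one_lt_two)

lemma summable_stirlingTerm {x : ℝ} (hx : 1 ≤ x) : Summable (stirlingTerm x) :=
  .of_nonneg_of_le (stirlingTerm_nonneg (by linarith)) (stirlingTerm_le hx)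
    (summable_one_div_nat_add_one_sq.mul_left _)

lemma stirlingTerm_sub_stirlingTerm_add_one {x : ℝ} (hx : 0 < x) (m : ℕ) :
    stirlingTerm x m - stirlingTerm (x + 1) m = m ! / rf x (m + 2) := by
  have := rf_pos hx (m + 1)
  have := rf_pos (x := x + 1) (by linarith) m
  simp only [stirlingTerm]
  rw [rf_succ' x, rf_succ (x + 1), show rf x (m + 2) = x * rf (x + 1) (m + 1) from rf_succ' x _,
    rf_succ (x + 1)]
  field_simp
  ring

lemma stirlingSum_sub_stirlingSum_add_one {x : ℝ} (hx : 1 ≤ x) :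
    stirlingSum x - stirlingSum (x + 1) = 1 / x ^ 2 := by
  rw [stirlingSum, stirlingSum, ← (summable_stirlingTerm hx).tsum_sub
    (summable_stirlingTerm (by linarith))]
  simp only [stirlingTerm_sub_stirlingTerm_add_one (by linarith : 0 < x)]
  exact (hasSum_factorial_div_rf hx).tsum_eq

lemma tendsto_stirlingSum_atTop : Tendsto stirlingSum atTop (𝓝 0) := by
  set C := ∑' m : ℕ, 1 / ((m : ℝ) + 1) ^ 2
  have hbound : ∀ᶠ x in atTop, stirlingSum x ≤ C * x⁻¹ := by
    filter_upwards [eventually_ge_atTop 1] with x hx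
    rw [mul_comm, ← one_div, ← tsum_mul_left]
    exact (summable_stirlingTerm hx).tsum_le_tsum (stirlingTerm_le hx)
      (summable_one_div_nat_add_one_sq.mul_left _)
  have hnonneg : ∀ᶠ x in atTop, 0 ≤ stirlingSum x := by
    filter_upwards [eventually_gt_atTop 0] with x hx
    exact tsum_nonneg (stirlingTerm_nonneg hx)
  exact squeeze_zero' hnonneg hbound (by simpa using tendsto_inv_atTop_zero.const_mul C)

lemma hasSum_one_div_add_sq {x : ℝ} (hx : 1 ≤ x) :
    HasSum (fun k : ℕ => 1 / (x + k) ^ 2) (stirlingSum x) := by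
  have hstep (k : ℕ) : stirlingSum (x + k) - stirlingSum (x + (k + 1 : ℕ)) = 1 / (x + k) ^ 2 := by
    rw [Nat.cast_succ, ← add_assoc]
    exact stirlingSum_sub_stirlingSum_add_one (by linarith [k.cast_nonneg (α := ℝ)])
  have hanti (k : ℕ) : stirlingSum (x + (k + 1 : ℕ)) ≤ stirlingSum (x + k) := by
    rw [← sub_nonneg, hstep]
    positivity
  have hlim : Tendsto (fun k : ℕ => stirlingSum (x + k)) atTop (𝓝 0) :=
    tendsto_stirlingSum_atTop.comp (tendsto_atTop_add_const_left _ x tendsto_natCast_atTop_atTop)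
  simpa only [hstep, add_zero, CharP.cast_eq_zero, sub_zero] using hasSum_sub_succ hanti hlim

/-- Stirling's 1730 inverse factorial series for the tail of `∑ 1/k²`. -/
theorem tail_zeta_two_stirling_series (n : ℕ) (hn : 1 ≤ n) :
    Summable (fun k : ℕ => (1 / ((k : ℝ) + 2)) * (Nat.factorial (k + 1) : ℝ) /
        ∏ i ∈ Finset.range (k + 2), ((n : ℝ) + i)) ∧
      ∑' k : ℕ, (1 : ℝ) / ((n : ℝ) + k) ^ 2 =
        1 / (n : ℝ) + ∑' k : ℕ, (1 / ((k : ℝ) + 2)) * (Nat.factorial (k + 1) : ℝ) /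
          ∏ i ∈ Finset.range (k + 2), ((n : ℝ) + i) := by
  have hx : (1 : ℝ) ≤ n := by exact_mod_cast hn
  have hterm : (fun k : ℕ => (1 / ((k : ℝ) + 2)) * (Nat.factorial (k + 1) : ℝ) /
      ∏ i ∈ Finset.range (k + 2), ((n : ℝ) + i)) = fun k => stirlingTerm n (k + 1) := by
    funext k
    simp only [stirlingTerm, rf]
    push_cast
    ring_nf
  rw [hterm, (hasSum_one_div_add_sq hx).tsum_eq, stirlingSum,
    (summable_stirlingTerm hx).tsum_eq_zero_add, stirlingTerm_zero]
  exact ⟨(summable_nat_add_iff 1).2 (summable_stirlingTerm hx), rfl⟩
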